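/- Let $G$ be a Cameron--Walker graph whose supporting connected bipartite graph is the complete bipartite graph $K_{n,m}$ with parts $X = \{x_1,\ldots,x_n\}$ and $Y = \{y_1,\ldots,y_m\}$, with leaves $z_{k,l}$ ($1 \leq l \leq f_k$) attached to $x_k$ and pendant triangle vertices $w_{j,l}^+, w_{j,l}^-$ ($1 \leq l \leq t_j$) attached to $y_j$, where $t_j \geq 1$ exactly for $j \leq m'$. Then every maximal independent set of $G$ has one of the two forms: (I) $\{y_{m'+1},\ldots,y_m\} \cup \{z_{k,l} : \text{all } k,l\} \cup \{y_i : i \in I\} \cup \{w_{i',j}^{\epsilon_{i',j}} : i' \in [m'] \setminus I, 1 \leq j \leq t_{i'}\}$ for some $I \subseteq [m']$ and signs $\epsilon$; or (II) $\{x_j : j \in J\} \cup \{z_{j',i} : j' \in [n] \setminus J, 1 \leq i \leq f_{j'}\} \cup \{w_{k,l}^{\epsilon_{k,l}} : 1 \leq k \leq m', 1 \leq l \leq t_k\}$ for some nonempty $J \subseteq [n]$ and signs $\epsilon$. -/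

import Mathlib

/-!
In a maximal independent set `A`, a vertex outside `A` has a neighbour in `A`. Hence a leaf
`z_{k,l}` lies in `A` exactly when `x_k` does not, and if `y_j ∉ A` then exactly one vertex of
each triangle at `y_j` lies in `A`. As `X` and `Y` are completely joined, either `A` meets `X`
and misses `Y` (form II), or `A` misses `X` and then contains every leaf and every `y_j`
carrying no triangle (form I).
-/

open scoped Classical

/-- Vertex type of a Cameron--Walker graph: the bipartition classes `Fin n` and `Fin m`
of the supporting bipartite graph, the leaves (the `l`-th leaf attached to the `i`-th
vertex of `X` is `⟨i, l⟩`), and the pairs of degree-2 vertices of the pendant triangles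
(the `l`-th triangle attached to the `j`-th vertex of `Y` has vertices `⟨j, l, true⟩`
and `⟨j, l, false⟩`). -/
abbrev CWVert (n m : ℕ) (f : Fin n → ℕ) (t : Fin m → ℕ) : Type :=
  (Fin n ⊕ Fin m) ⊕ ((Σ i : Fin n, Fin (f i)) ⊕ (Σ j : Fin m, Fin (t j) × Bool))

/-- The Cameron--Walker graph determined by a bipartite adjacency relation
`R : Fin n → Fin m → Prop` between the parts `X = Fin n` and `Y = Fin m`,
with `f i` leaves attached to the `i`-th vertex of `X` and `t j` pendant triangles
attached to the `j`-th vertex of `Y`. -/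
def cwGraph (n m : ℕ) (f : Fin n → ℕ) (t : Fin m → ℕ) (R : Fin n → Fin m → Prop) :
    SimpleGraph (CWVert n m f t) :=
  SimpleGraph.fromRel (fun a b =>
    (∃ i j, a = Sum.inl (Sum.inl i) ∧ b = Sum.inl (Sum.inr j) ∧ R i j) ∨
    (∃ (i : Fin n) (l : Fin (f i)), a = Sum.inl (Sum.inl i) ∧ b = Sum.inr (Sum.inl ⟨i, l⟩)) ∨
    (∃ (j : Fin m) (p : Fin (t j) × Bool),
      a = Sum.inl (Sum.inr j) ∧ b = Sum.inr (Sum.inr ⟨j, p⟩)) ∨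
    (∃ (j : Fin m) (l : Fin (t j)),
      a = Sum.inr (Sum.inr ⟨j, (l, true)⟩) ∧ b = Sum.inr (Sum.inr ⟨j, (l, false)⟩)))

/-- An independent set of a graph. -/
def IsIndepSet {V : Type*} (G : SimpleGraph V) (A : Finset V) : Prop :=
  ∀ u ∈ A, ∀ v ∈ A, ¬ G.Adj u v

/-- A maximal independent set of a graph. -/
def IsMaxIndepSet {V : Type*} (G : SimpleGraph V) (A : Finset V) : Prop :=
  IsIndepSet G A ∧ ∀ B : Finset V, IsIndepSet G B → A ⊆ B → B = A

section MaximalIndependentSet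

variable {V : Type*} {G : SimpleGraph V} {A : Finset V}

lemma IsIndepSet.notMem_of_adj (hA : IsIndepSet G A) {u v : V} (hu : u ∈ A)
    (huv : G.Adj u v) : v ∉ A :=
  fun hv => hA u hu v hv huv

lemma IsMaxIndepSet.exists_adj_mem_of_notMem (hA : IsMaxIndepSet G A) {v : V} (hv : v ∉ A) :
    ∃ u ∈ A, G.Adj v u := by
  by_contra! hfree
  have hindep : IsIndepSet G (insert v A) := by
    intro a ha b hb
    rw [Finset.mem_insert] at ha hb
    rcases ha with rfl | ha <;> rcases hb with rfl | hb
    · exact G.loopless.irrefl _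
    · exact hfree b hb
    · exact fun h => hfree a ha h.symm
    · exact hA.1 a ha b hb
  exact hv (hA.2 _ hindep (Finset.subset_insert v A) ▸ Finset.mem_insert_self v A)

end MaximalIndependentSet

namespace CameronWalker

variable {n m : ℕ} {f : Fin n → ℕ} {t : Fin m → ℕ} {R : Fin n → Fin m → Prop}

lemma adj_x_y {i : Fin n} {j : Fin m} (h : R i j) :
    (cwGraph n m f t R).Adj (Sum.inl (Sum.inl i)) (Sum.inl (Sum.inr j)) := by
  simp [cwGraph, h]

lemma adj_x_z (i : Fin n) (l : Fin (f i)) :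
    (cwGraph n m f t R).Adj (Sum.inl (Sum.inl i)) (Sum.inr (Sum.inl ⟨i, l⟩)) := by
  simp [cwGraph]

lemma adj_y_w (j : Fin m) (p : Fin (t j) × Bool) :
    (cwGraph n m f t R).Adj (Sum.inl (Sum.inr j)) (Sum.inr (Sum.inr ⟨j, p⟩)) := by
  rw [cwGraph, SimpleGraph.fromRel_adj]
  exact ⟨by simp, .inl (.inr (.inr (.inl ⟨j, p, rfl, rfl⟩)))⟩

lemma adj_w_w (j : Fin m) (l : Fin (t j)) (b : Bool) :
    (cwGraph n m f t R).Adj (Sum.inr (Sum.inr ⟨j, (l, b)⟩))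
      (Sum.inr (Sum.inr ⟨j, (l, !b)⟩)) := by
  rw [cwGraph, SimpleGraph.fromRel_adj]
  refine ⟨by simp, ?_⟩
  cases b
  · exact .inr (.inr (.inr (.inr ⟨j, l, rfl, rfl⟩)))
  · exact .inl (.inr (.inr (.inr ⟨j, l, rfl, rfl⟩)))

lemma eq_x_of_adj_z {k : Fin n} {l : Fin (f k)} {u : CWVert n m f t}
    (h : (cwGraph n m f t R).Adj (Sum.inr (Sum.inl ⟨k, l⟩)) u) : u = Sum.inl (Sum.inl k) := by
  rcases u with (i | j) | (⟨i, l'⟩ | ⟨j, l', b⟩) <;> simp_all [cwGraph]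

lemma adj_w_cases {j : Fin m} {l : Fin (t j)} {b : Bool} {u : CWVert n m f t}
    (h : (cwGraph n m f t R).Adj (Sum.inr (Sum.inr ⟨j, (l, b)⟩)) u) :
    u = Sum.inl (Sum.inr j) ∨ u = Sum.inr (Sum.inr ⟨j, (l, !b)⟩) := by
  rcases u with (i | j') | (⟨i, l'⟩ | ⟨j', l', b'⟩) <;> simp [cwGraph] at h ⊢
  · obtain ⟨_, h | h⟩ := h <;> exact h.1.symm
  · obtain ⟨-, ⟨_, _, ⟨rfl, _⟩, rfl, _⟩ | ⟨_, _, ⟨rfl, _⟩, rfl, _⟩⟩ := h <;>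
      simp_all

lemma adj_y_cases {j : Fin m} {u : CWVert n m f t}
    (h : (cwGraph n m f t R).Adj (Sum.inl (Sum.inr j)) u) :
    (∃ i, R i j ∧ u = Sum.inl (Sum.inl i)) ∨
      ∃ p : Fin (t j) × Bool, u = Sum.inr (Sum.inr ⟨j, p⟩) := by
  rcases u with (i | j') | (⟨i, l'⟩ | ⟨j', l', b'⟩) <;> simp [cwGraph] at h
  · exact .inl ⟨i, h, rfl⟩
  · obtain ⟨_, ⟨rfl, -⟩ | ⟨rfl, -⟩⟩ := h <;> exact .inr ⟨_, rfl⟩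

section MaximalIndependentSet

variable {A : Finset (CWVert n m f t)}

lemma mem_z_iff (hA : IsMaxIndepSet (cwGraph n m f t R) A) (k : Fin n) (l : Fin (f k)) :
    Sum.inr (Sum.inl ⟨k, l⟩) ∈ A ↔ Sum.inl (Sum.inl k) ∉ A := by
  refine ⟨fun hz hx => hA.1.notMem_of_adj hx (adj_x_z k l) hz, fun hx => ?_⟩
  by_contra hz
  obtain ⟨u, hu, hadj⟩ := hA.exists_adj_mem_of_notMem hz
  exact hx (eq_x_of_adj_z hadj ▸ hu)

lemma mem_w_iff_notMem_w_not (hA : IsMaxIndepSet (cwGraph n m f t R) A)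
    {j : Fin m} (hy : Sum.inl (Sum.inr j) ∉ A) (l : Fin (t j)) (b : Bool) :
    Sum.inr (Sum.inr ⟨j, (l, b)⟩) ∈ A ↔ Sum.inr (Sum.inr ⟨j, (l, !b)⟩) ∉ A := by
  refine ⟨fun hw => hA.1.notMem_of_adj hw (adj_w_w j l b), fun hw' => ?_⟩
  by_contra hw
  obtain ⟨u, hu, hadj⟩ := hA.exists_adj_mem_of_notMem hw
  rcases adj_w_cases hadj with rfl | rfl
  exacts [hy hu, hw' hu]

lemma mem_w_iff (hA : IsMaxIndepSet (cwGraph n m f t R) A)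
    {j : Fin m} (hy : Sum.inl (Sum.inr j) ∉ A) (l : Fin (t j)) (b : Bool) :
    Sum.inr (Sum.inr ⟨j, (l, b)⟩) ∈ A ↔
      b = decide (Sum.inr (Sum.inr ⟨j, (l, true)⟩) ∈ A) := by
  cases b
  · simpa [eq_comm] using (mem_w_iff_notMem_w_not hA hy l true).not.symm
  · simp

lemma mem_y_of_forall_x_notMem (hA : IsMaxIndepSet (cwGraph n m f t R) A)
    {j : Fin m} (htj : t j = 0) (hx : ∀ i, Sum.inl (Sum.inl i) ∉ A) :
    Sum.inl (Sum.inr j) ∈ A := by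
  by_contra hy
  obtain ⟨u, hu, hadj⟩ := hA.exists_adj_mem_of_notMem hy
  rcases adj_y_cases hadj with ⟨i, -, rfl⟩ | ⟨⟨l, -⟩, -⟩
  · exact hx i hu
  · exact (htj ▸ l).elim0

end MaximalIndependentSet

end CameronWalker

theorem stmt17 (n m m' : ℕ) (f : Fin n → ℕ) (t : Fin m → ℕ)
    (ht : ∀ j : Fin m, 1 ≤ t j ↔ (j : ℕ) < m')
    (A : Finset (CWVert n m f t))
    (hA : IsMaxIndepSet (cwGraph n m f t (fun _ _ => True)) A) :
    (∃ I : Finset (Fin m), (∀ j ∈ I, (j : ℕ) < m') ∧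
      ∃ ε : ∀ j : Fin m, Fin (t j) → Bool,
        ∀ v : CWVert n m f t, v ∈ A ↔
          (match v with
            | Sum.inl (Sum.inl _) => False
            | Sum.inl (Sum.inr j) => m' ≤ (j : ℕ) ∨ j ∈ I
            | Sum.inr (Sum.inl _) => True
            | Sum.inr (Sum.inr ⟨j, (l, b)⟩) => j ∉ I ∧ b = ε j l)) ∨
    (∃ J : Finset (Fin n), J.Nonempty ∧
      ∃ ε : ∀ j : Fin m, Fin (t j) → Bool,
        ∀ v : CWVert n m f t, v ∈ A ↔
          (match v with
            | Sum.inl (Sum.inl i) => i ∈ J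
            | Sum.inl (Sum.inr _) => False
            | Sum.inr (Sum.inl ⟨k, _⟩) => k ∉ J
            | Sum.inr (Sum.inr ⟨j, (l, b)⟩) => b = ε j l)) := by
  open CameronWalker in
  let ε : ∀ j : Fin m, Fin (t j) → Bool := fun j l =>
    decide (Sum.inr (Sum.inr ⟨j, (l, true)⟩) ∈ A)
  by_cases hx : ∀ i, (Sum.inl (Sum.inl i) : CWVert n m f t) ∉ A
  · let I : Finset (Fin m) := {j | (j : ℕ) < m' ∧ (Sum.inl (Sum.inr j) : CWVert n m f t) ∈ A}
    refine .inl ⟨I, fun j hj => (Finset.mem_filter.mp hj).2.1, ε, ?_⟩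
    rintro ((i | j) | (⟨k, l⟩ | ⟨j, l, b⟩))
    · exact iff_of_false (hx i) id
    · by_cases hj : (j : ℕ) < m'
      · simp [I, hj]
      · have htj : t j = 0 := by have := ht j; omega
        exact iff_of_true (mem_y_of_forall_x_notMem hA htj hx) (.inl (not_lt.mp hj))
    · exact iff_of_true ((mem_z_iff hA k l).mpr (hx k)) trivial
    · have hj : (j : ℕ) < m' := (ht j).mp (Nat.one_le_iff_ne_zero.mpr fun h => (h ▸ l).elim0)
      by_cases hy : Sum.inl (Sum.inr j) ∈ A
      · exact iff_of_false (hA.1.notMem_of_adj hy (adj_y_w j (l, b))) (by simp [I, hj, hy])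
      · simpa [I, hy] using mem_w_iff hA hy l b
  · obtain ⟨i₀, hi₀⟩ := not_forall_not.mp hx
    have hy : ∀ j, (Sum.inl (Sum.inr j) : CWVert n m f t) ∉ A :=
      fun j => hA.1.notMem_of_adj hi₀ (adj_x_y trivial)
    let J : Finset (Fin n) := {i | (Sum.inl (Sum.inl i) : CWVert n m f t) ∈ A}
    refine .inr ⟨J, ⟨i₀, by simpa [J] using hi₀⟩, ε, ?_⟩
    rintro ((i | j) | (⟨k, l⟩ | ⟨j, l, b⟩))
    · simp [J]
    · exact iff_of_false (hy j) id
    · simpa [J] using mem_z_iff hA k l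
    · exact mem_w_iff hA (hy j) l b
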